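/- In the unlearning setup, for every integer k ≥ 1 one has E Tr(J_0ᵀ J_1ᵀ ⋯ J_{k−1}ᵀ J_{k−1} ⋯ J_1 J_0) ≥ Tr(M_k) = Tr(J^{2k}) + Tr(N_k), where the expectation is over the Bernoulli batch selections. Consequently, if Tr(N_k) → ∞ as k → ∞, then E‖w_k‖² → ∞ as k → ∞. -/

import Mathlib

open Matrix Filter Finset Set
open scoped BigOperators

noncomputable section

/-- Frobenius norm of a real square matrix. -/
def frob {n : Type*} [Fintype n] (M : Matrix n n ℝ) : ℝ :=
  Real.sqrt (∑ i, ∑ j, (M i j) ^ 2)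

open Classical in
/-- The positive semidefinite square root of a matrix (junk value `0` on non-PSD input). -/
def psdSqrt {n : Type*} [Fintype n] [DecidableEq n] (A : Matrix n n ℝ) : Matrix n n ℝ :=
  if h : A.PosSemidef then
    (h.1.eigenvectorUnitary : Matrix n n ℝ) * Matrix.diagonal (RCLike.ofReal ∘ Real.sqrt ∘ h.1.eigenvalues) *
      (star h.1.eigenvectorUnitary : Matrix n n ℝ)
  else 0

open Classical in
/-- The largest eigenvalue of a symmetric real matrix (junk value `0` otherwise). -/
def lamMax {n : Type*} [Fintype n] [DecidableEq n] (A : Matrix n n ℝ) : ℝ :=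
  if h : A.IsHermitian then ⨆ i, h.eigenvalues i else 0

/-- Probability of observing the Bernoulli(B/n) selection pattern `x`. -/
def selProb (n B : ℕ) (x : Fin n → Bool) : ℝ :=
  ∏ i, if x i then (B : ℝ) / n else 1 - (B : ℝ) / n

/-- Average Hessian of a family. -/
def Hbar {d n : ℕ} (H : Fin n → Matrix (Fin d) (Fin d) ℝ) : Matrix (Fin d) (Fin d) ℝ :=
  (n : ℝ)⁻¹ • ∑ i, H i

/-- Mean update operator `J = I − η(1−α)H_R + ηα H_F`. -/
def Jbar {d nr nf : ℕ} (η α : ℝ) (HR : Fin nr → Matrix (Fin d) (Fin d) ℝ)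
    (HF : Fin nf → Matrix (Fin d) (Fin d) ℝ) : Matrix (Fin d) (Fin d) ℝ :=
  1 - (η * (1 - α)) • Hbar HR + (η * α) • Hbar HF

/-- Random update operator for the batch-selection pattern `x`. -/
def Jop {d nr nf : ℕ} (η α : ℝ) (B : ℕ) (HR : Fin nr → Matrix (Fin d) (Fin d) ℝ)
    (HF : Fin nf → Matrix (Fin d) (Fin d) ℝ)
    (x : (Fin nr → Bool) × (Fin nf → Bool)) : Matrix (Fin d) (Fin d) ℝ :=
  1 - (η * (1 - α) / B) • (∑ r, if x.1 r then HR r else 0)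
    + (η * α / B) • (∑ f, if x.2 f then HF f else 0)

/-- `C_r = η²(1−α)²(1/n_r)(1/B − 1/n_r)`. -/
def Crc (η α : ℝ) (B nr : ℕ) : ℝ :=
  η ^ 2 * (1 - α) ^ 2 * (nr : ℝ)⁻¹ * ((B : ℝ)⁻¹ - (nr : ℝ)⁻¹)

/-- `C_f = η²α²(1/n_f)(1/B − 1/n_f)`. -/
def Cfc (η α : ℝ) (B nf : ℕ) : ℝ :=
  η ^ 2 * α ^ 2 * (nf : ℝ)⁻¹ * ((B : ℝ)⁻¹ - (nf : ℝ)⁻¹)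

/-- Noise-accumulation matrices `N_k`. -/
def Nmat {d nr nf : ℕ} (η α : ℝ) (B : ℕ) (HR : Fin nr → Matrix (Fin d) (Fin d) ℝ)
    (HF : Fin nf → Matrix (Fin d) (Fin d) ℝ) : ℕ → Matrix (Fin d) (Fin d) ℝ
  | 0 => 1
  | k + 1 =>
      Cfc η α B nf • ∑ f, HF f * Nmat η α B HR HF k * HF f
        + Crc η α B nr • ∑ r, HR r * Nmat η α B HR HF k * HR r

/-- `W_k = J_{k−1} ⋯ J_1 J_0` for a finite sequence of batch selections. -/
def Wk {d nr nf : ℕ} (η α : ℝ) (B : ℕ) (HR : Fin nr → Matrix (Fin d) (Fin d) ℝ)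
    (HF : Fin nf → Matrix (Fin d) (Fin d) ℝ) {k : ℕ}
    (s : Fin k → (Fin nr → Bool) × (Fin nf → Bool)) : Matrix (Fin d) (Fin d) ℝ :=
  (List.ofFn fun i => Jop η α B HR HF (s i)).reverse.prod

/-- `E‖w_k‖² = E Tr(W_k W_kᵀ)`, the expectation taken over the i.i.d. Bernoulli
batch selections of the `k` steps. -/
def Ewk2 {d nr nf : ℕ} (η α : ℝ) (B : ℕ) (HR : Fin nr → Matrix (Fin d) (Fin d) ℝ)
    (HF : Fin nf → Matrix (Fin d) (Fin d) ℝ) (k : ℕ) : ℝ :=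
  ∑ s : Fin k → (Fin nr → Bool) × (Fin nf → Bool),
    (∏ i, selProb nr B (s i).1 * selProb nf B (s i).2) *
      (Wk η α B HR HF s * (Wk η α B HR HF s)ᵀ).trace

/-- `E[(e₁ᵀ w_k)²]`, i.e. the `(i0,i0)` entry of `E[W_k W_kᵀ]`. -/
def Ee1 {d nr nf : ℕ} (η α : ℝ) (B : ℕ) (HR : Fin nr → Matrix (Fin d) (Fin d) ℝ)
    (HF : Fin nf → Matrix (Fin d) (Fin d) ℝ) (i0 : Fin d) (k : ℕ) : ℝ :=
  ∑ s : Fin k → (Fin nr → Bool) × (Fin nf → Bool),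
    (∏ i, selProb nr B (s i).1 * selProb nf B (s i).2) *
      ((Wk η α B HR HF s * (Wk η α B HR HF s)ᵀ) i0 i0)

/-- Mixed Hessian `D_{rf} = C'_r H_r^R + C'_f H_f^F` for a retain/forget pair. -/
def Drf {d nr nf : ℕ} (Cr' Cf' : ℝ) (HR : Fin nr → Matrix (Fin d) (Fin d) ℝ)
    (HF : Fin nf → Matrix (Fin d) (Fin d) ℝ) (p : Fin nr × Fin nf) :
    Matrix (Fin d) (Fin d) ℝ :=
  Cr' • HR p.1 + Cf' • HF p.2

/-- Mix-Hessian `D = (1/(n_r n_f)) Σ_{r,f} D_{rf}`. -/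
def Dmix {d nr nf : ℕ} (Cr' Cf' : ℝ) (HR : Fin nr → Matrix (Fin d) (Fin d) ℝ)
    (HF : Fin nf → Matrix (Fin d) (Fin d) ℝ) : Matrix (Fin d) (Fin d) ℝ :=
  ((nr : ℝ) * nf)⁻¹ • ∑ p : Fin nr × Fin nf, Drf Cr' Cf' HR HF p

/-- Mix-coherence matrix `S_{(r,f),(r',f')} = ‖D_{rf}^{1/2} D_{r'f'}^{1/2}‖_F`. -/
def Smat {d nr nf : ℕ} (Cr' Cf' : ℝ) (HR : Fin nr → Matrix (Fin d) (Fin d) ℝ)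
    (HF : Fin nf → Matrix (Fin d) (Fin d) ℝ) :
    Matrix (Fin nr × Fin nf) (Fin nr × Fin nf) ℝ :=
  Matrix.of fun p q =>
    frob (psdSqrt (Drf Cr' Cf' HR HF p) * psdSqrt (Drf Cr' Cf' HR HF q))

/-- Unlearning coherence `σ = λ_max(S) / max_{(r,f)} λ_max(D_{rf})`. -/
def cohSigma {d nr nf : ℕ} (Cr' Cf' : ℝ) (HR : Fin nr → Matrix (Fin d) (Fin d) ℝ)
    (HF : Fin nf → Matrix (Fin d) (Fin d) ℝ) : ℝ :=
  lamMax (Smat Cr' Cf' HR HF) / ⨆ p : Fin nr × Fin nf, lamMax (Drf Cr' Cf' HR HF p)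

/-- Stacked filter-weight vector of the two-layer ReLU CNN signal-plus-noise model. -/
def wvec (d mfil : ℕ) (μ ξi : Fin d → ℝ) (yi : ℝ)
    (ai bi : Bool → Fin mfil → Bool) : (Bool × Fin mfil) × Fin d → ℝ :=
  fun p =>
    ((if p.1.1 then (1 : ℝ) else -1) / mfil) *
      ((if ai p.1.1 p.1.2 then (1 : ℝ) else 0) * μ p.2 +
        (if bi p.1.1 p.1.2 then (1 : ℝ) else 0) * yi * ξi p.2)

/-- Per-sample Hessian `H_i = ℓ''_i w_i w_iᵀ` of the signal-plus-noise model. -/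
def hessCNN (d mfil : ℕ) (μ ξi : Fin d → ℝ) (yi ℓi : ℝ)
    (ai bi : Bool → Fin mfil → Bool) :
    Matrix ((Bool × Fin mfil) × Fin d) ((Bool × Fin mfil) × Fin d) ℝ :=
  ℓi • vecMulVec (wvec d mfil μ ξi yi ai bi) (wvec d mfil μ ξi yi ai bi)

/-- Mixed Hessian `D_{rf} = C'_r H_r + C'_f H_{n_r+f}` in the CNN model, with the
retain set given by the first `n_r` samples and the forget set by the last `n_f`. -/
def DrfCNN (d mfil nr nf : ℕ) (μ : Fin d → ℝ) (ξ : Fin (nr + nf) → Fin d → ℝ)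
    (y ℓ : Fin (nr + nf) → ℝ) (a b : Fin (nr + nf) → Bool → Fin mfil → Bool)
    (Cr' Cf' : ℝ) (p : Fin nr × Fin nf) :
    Matrix ((Bool × Fin mfil) × Fin d) ((Bool × Fin mfil) × Fin d) ℝ :=
  Cr' • hessCNN d mfil μ (ξ (Fin.castAdd nf p.1)) (y (Fin.castAdd nf p.1))
        (ℓ (Fin.castAdd nf p.1)) (a (Fin.castAdd nf p.1)) (b (Fin.castAdd nf p.1))
    + Cf' • hessCNN d mfil μ (ξ (Fin.natAdd nr p.2)) (y (Fin.natAdd nr p.2))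
        (ℓ (Fin.natAdd nr p.2)) (a (Fin.natAdd nr p.2)) (b (Fin.natAdd nr p.2))

/-- Mix-coherence matrix of the CNN model. -/
def SmatCNN (d mfil nr nf : ℕ) (μ : Fin d → ℝ) (ξ : Fin (nr + nf) → Fin d → ℝ)
    (y ℓ : Fin (nr + nf) → ℝ) (a b : Fin (nr + nf) → Bool → Fin mfil → Bool)
    (Cr' Cf' : ℝ) : Matrix (Fin nr × Fin nf) (Fin nr × Fin nf) ℝ :=
  Matrix.of fun p q =>
    frob (psdSqrt (DrfCNN d mfil nr nf μ ξ y ℓ a b Cr' Cf' p) *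
      psdSqrt (DrfCNN d mfil nr nf μ ξ y ℓ a b Cr' Cf' q))

/-!
The steps are independent, so `E[W_k M W_kᵀ] = T^k(M)` for the one-step second-moment map
`T(M) = E[J_x M J_xᵀ]`. The first two moments of the Bernoulli selections,
`E[x_i] = p` and `E[x_i x_j] = p² + [i = j](p - p²)`, give `T(M) = J M Jᵀ + 𝒩(M)`, where `𝒩`
is the positive map with `N_{k+1} = 𝒩(N_k)`. As `T` is monotone in the Loewner order and
`J N_k Jᵀ, 𝒩(J^k J^kᵀ) ⪰ 0`, induction gives `T^k(I) ⪰ J^k J^kᵀ + N_k` for `k ≥ 1`; taking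
traces yields the bound, and `Tr J^{2k} = ‖J^k‖_F² ≥ 0` yields the divergence.
-/

open scoped MatrixOrder

namespace Unlearning

def ind (b : Bool) : ℝ := if b then 1 else 0

lemma ind_mul_self (b : Bool) : ind b * ind b = ind b := by cases b <;> simp [ind]

section Selection

variable {n B : ℕ}

lemma sum_selProb_mul_prod_ind (S : Finset (Fin n)) :
    ∑ x : Fin n → Bool, selProb n B x * ∏ i ∈ S, ind (x i) = ((B : ℝ) / n) ^ S.card := by
  set p : ℝ := (B : ℝ) / n
  have factor : ∀ x : Fin n → Bool, selProb n B x * ∏ i ∈ S, ind (x i)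
      = ∏ i, (if x i then p else 1 - p) * (if i ∈ S then ind (x i) else 1) := by
    intro x
    rw [prod_mul_distrib, prod_ite_mem, Finset.univ_inter]
    rfl
  have marginal : ∀ i, ∑ b : Bool, (if b then p else 1 - p) * (if i ∈ S then ind b else 1)
      = if i ∈ S then p else 1 := by
    intro i
    split_ifs <;> simp [ind]
  simp_rw [factor]
  rw [← Fintype.prod_sum (fun i b => (if b then p else 1 - p) * (if i ∈ S then ind b else 1))]
  simp_rw [marginal]
  rw [prod_ite_mem, Finset.univ_inter, prod_const]

lemma sum_selProb : ∑ x : Fin n → Bool, selProb n B x = 1 := by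
  simpa using sum_selProb_mul_prod_ind (B := B) (∅ : Finset (Fin n))

lemma sum_selProb_mul_ind (i : Fin n) :
    ∑ x : Fin n → Bool, selProb n B x * ind (x i) = (B : ℝ) / n := by
  simpa using sum_selProb_mul_prod_ind (B := B) {i}

lemma sum_selProb_mul_ind_mul_ind (i j : Fin n) :
    ∑ x : Fin n → Bool, selProb n B x * (ind (x i) * ind (x j))
      = if i = j then (B : ℝ) / n else ((B : ℝ) / n) ^ 2 := by
  split_ifs with hij
  · simp_rw [hij, ind_mul_self, sum_selProb_mul_ind]
  · simpa [prod_pair hij, card_pair hij] using sum_selProb_mul_prod_ind (B := B) {i, j}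

lemma selProb_nonneg (hB : B ≤ n) (x : Fin n → Bool) : 0 ≤ selProb n B x := by
  have hp : (B : ℝ) / n ≤ 1 := div_le_one_of_le₀ (by exact_mod_cast hB) (Nat.cast_nonneg n)
  refine prod_nonneg fun i _ => ?_
  split_ifs
  · positivity
  · linarith

variable {V : Type*} [AddCommGroup V] [Module ℝ V]

lemma sum_selProb_smul_quadratic (a : V) (b : Fin n → V) (q : Fin n → Fin n → V) :
    ∑ x : Fin n → Bool, selProb n B x •
        (a + ∑ i, ind (x i) • b i + ∑ i, ∑ j, (ind (x i) * ind (x j)) • q i j)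
      = a + ((B : ℝ) / n) • ∑ i, b i + ((B : ℝ) / n) ^ 2 • ∑ i, ∑ j, q i j
        + ((B : ℝ) / n - ((B : ℝ) / n) ^ 2) • ∑ i, q i i := by
  have first_moment : ∀ i, ∑ x : Fin n → Bool, (selProb n B x * ind (x i)) • b i
      = ((B : ℝ) / n) • b i := by
    intro i
    rw [← sum_smul, sum_selProb_mul_ind]
  have second_moment : ∀ i j, ∑ x : Fin n → Bool, (selProb n B x * (ind (x i) * ind (x j))) • q i j
      = (((B : ℝ) / n) ^ 2 + if i = j then (B : ℝ) / n - ((B : ℝ) / n) ^ 2 else 0) • q i j := by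
    intro i j
    rw [← sum_smul, sum_selProb_mul_ind_mul_ind]
    split_ifs <;> simp
  simp only [smul_add, sum_add_distrib, smul_sum, smul_smul]
  rw [← sum_smul, sum_selProb, one_smul, sum_comm (γ := Fin n → Bool)]
  rw [sum_congr rfl fun i _ => first_moment i, sum_comm (γ := Fin n → Bool)]
  rw [sum_congr rfl fun i _ => (sum_comm (γ := Fin n → Bool)).trans
    (sum_congr rfl fun j _ => second_moment i j)]
  simp only [add_smul, sum_add_distrib, ite_smul, zero_smul, sum_ite_eq, Finset.mem_univ, if_true]
  abel

end Selection

def selSum {n : ℕ} {A : Type*} [AddCommMonoid A] (H : Fin n → A) (x : Fin n → Bool) : A :=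
  ∑ i, if x i then H i else 0

lemma isSelfAdjoint_selSum {n : ℕ} {A : Type*} [AddCommMonoid A] [StarAddMonoid A]
    {H : Fin n → A} (hH : ∀ i, IsSelfAdjoint (H i)) (x : Fin n → Bool) :
    IsSelfAdjoint (selSum H x) :=
  isSelfAdjoint_sum _ fun i _ => by cases x i <;> simp [hH i]

section Algebra

variable {n B : ℕ} {A : Type*} [Ring A] [Algebra ℝ A]

lemma selSum_eq_sum_ind_smul (H : Fin n → A) (x : Fin n → Bool) :
    selSum H x = ∑ i, ind (x i) • H i :=
  sum_congr rfl fun i _ => by cases x i <;> simp [ind]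

lemma sum_mul_sum_smul (a : Fin n → ℝ) (H : Fin n → A) (M : A) :
    (∑ i, a i • H i) * M * (∑ j, a j • H j) = ∑ i, ∑ j, (a i * a j) • (H i * M * H j) := by
  rw [sum_mul, sum_mul_sum]
  simp only [smul_mul_assoc, mul_smul_comm, smul_smul]
  exact sum_congr rfl fun i _ => sum_congr rfl fun j _ => by rw [mul_comm]

lemma sum_selProb_smul_conj_selSum (V M : A) (c : ℝ) (H : Fin n → A) :
    ∑ x : Fin n → Bool, selProb n B x • ((V + c • selSum H x) * M * (V + c • selSum H x))
      = (V + (c * ((B : ℝ) / n)) • ∑ i, H i) * M * (V + (c * ((B : ℝ) / n)) • ∑ i, H i)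
        + (c ^ 2 * ((B : ℝ) / n - ((B : ℝ) / n) ^ 2)) • ∑ i, H i * M * H i := by
  have expand : ∀ x : Fin n → Bool, (V + c • selSum H x) * M * (V + c • selSum H x)
      = V * M * V + ∑ i, ind (x i) • (c • (H i * M * V + V * M * H i))
        + ∑ i, ∑ j, (ind (x i) * ind (x j)) • (c ^ 2 • (H i * M * H j)) := by
    intro x
    have cross : selSum H x * M * V + V * M * selSum H x
        = ∑ i, ind (x i) • (H i * M * V + V * M * H i) := by
      simp only [selSum_eq_sum_ind_smul, sum_mul, mul_sum, smul_mul_assoc, mul_smul_comm,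
        smul_add, sum_add_distrib]
    have square := sum_mul_sum_smul (fun i => ind (x i)) H M
    rw [← selSum_eq_sum_ind_smul] at square
    simp only [smul_comm _ c, smul_comm _ (c ^ 2), ← smul_sum, ← cross, ← square]
    simp only [add_mul, mul_add, smul_mul_assoc, mul_smul_comm, mul_assoc]
    module
  simp_rw [expand, sum_selProb_smul_quadratic]
  have cross : ∑ i, (H i * M * V + V * M * H i) = (∑ i, H i) * M * V + V * M * ∑ i, H i := by
    simp only [sum_add_distrib, sum_mul, mul_sum]
  have square : ∑ i, ∑ j, H i * M * H j = (∑ i, H i) * M * ∑ i, H i := by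
    rw [sum_mul, sum_mul_sum]
  simp only [← smul_sum, cross, square]
  simp only [add_mul, mul_add, smul_mul_assoc, mul_smul_comm, mul_assoc]
  module

end Algebra

lemma div_sq_mul_sub_sq {b : ℝ} (hb : b ≠ 0) (c n : ℝ) :
    (c / b) ^ 2 * (b / n - (b / n) ^ 2) = c ^ 2 * n⁻¹ * (b⁻¹ - n⁻¹) := by
  rcases eq_or_ne n 0 with rfl | hn
  · simp
  · field_simp

lemma transpose_eq_star {n : Type*} (A : Matrix n n ℝ) : Aᵀ = star A :=
  (conjTranspose_eq_transpose_of_trivial A).symm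

section Operators

variable {d nr nf : ℕ} (η α : ℝ) (B : ℕ) (HR : Fin nr → Matrix (Fin d) (Fin d) ℝ)
  (HF : Fin nf → Matrix (Fin d) (Fin d) ℝ)

def noiseMap (M : Matrix (Fin d) (Fin d) ℝ) : Matrix (Fin d) (Fin d) ℝ :=
  Cfc η α B nf • ∑ f, HF f * M * HF f + Crc η α B nr • ∑ r, HR r * M * HR r

lemma Nmat_succ (k : ℕ) :
    Nmat η α B HR HF (k + 1) = noiseMap η α B HR HF (Nmat η α B HR HF k) := rfl

def expectedConj (M : Matrix (Fin d) (Fin d) ℝ) : Matrix (Fin d) (Fin d) ℝ :=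
  ∑ x : (Fin nr → Bool) × (Fin nf → Bool),
    (selProb nr B x.1 * selProb nf B x.2) • (Jop η α B HR HF x * M * (Jop η α B HR HF x)ᵀ)

lemma Jop_eq_selSum (x : (Fin nr → Bool) × (Fin nf → Bool)) :
    Jop η α B HR HF x = 1 - (η * (1 - α) / B) • selSum HR x.1 + (η * α / B) • selSum HF x.2 :=
  rfl

variable {HR HF}

lemma isSelfAdjoint_Jop (hR : ∀ r, IsSelfAdjoint (HR r)) (hF : ∀ f, IsSelfAdjoint (HF f))
    (x : (Fin nr → Bool) × (Fin nf → Bool)) : IsSelfAdjoint (Jop η α B HR HF x) :=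
  (IsSelfAdjoint.sub (.one _) (.smul (.all _) (isSelfAdjoint_selSum hR x.1))).add
    (.smul (.all _) (isSelfAdjoint_selSum hF x.2))

lemma isSelfAdjoint_Jbar (hR : ∀ r, IsSelfAdjoint (HR r)) (hF : ∀ f, IsSelfAdjoint (HF f)) :
    IsSelfAdjoint (Jbar η α HR HF) := by
  have hbar : ∀ {n} {H : Fin n → Matrix (Fin d) (Fin d) ℝ}, (∀ i, IsSelfAdjoint (H i)) →
      IsSelfAdjoint (Hbar H) := fun hH => .smul (.all _) (isSelfAdjoint_sum _ fun i _ => hH i)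
  exact (IsSelfAdjoint.sub (.one _) (.smul (.all _) (hbar hR))).add (.smul (.all _) (hbar hF))

lemma Jbar_eq_add_smul_sum (hB : B ≠ 0) :
    Jbar η α HR HF = 1 + (η * α / B * (B / nf)) • ∑ f, HF f
      + (-(η * (1 - α) / B) * (B / nr)) • ∑ r, HR r := by
  have hcF : η * α / B * (B / nf) = η * α * (nf : ℝ)⁻¹ := by field_simp
  have hcR : -(η * (1 - α) / B) * (B / nr) = -(η * (1 - α) * (nr : ℝ)⁻¹) := by field_simp
  simp only [Jbar, Hbar, smul_smul, hcF, hcR]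
  module

lemma expectedConj_eq (hB : B ≠ 0) (hR : ∀ r, IsSelfAdjoint (HR r))
    (hF : ∀ f, IsSelfAdjoint (HF f)) (M : Matrix (Fin d) (Fin d) ℝ) :
    expectedConj η α B HR HF M
      = Jbar η α HR HF * M * (Jbar η α HR HF)ᵀ + noiseMap η α B HR HF M := by
  have hJop : ∀ x, (Jop η α B HR HF x)ᵀ = Jop η α B HR HF x :=
    fun x => (isHermitian_iff_isSymm.mp (isSelfAdjoint_Jop η α B hR hF x)).eq
  simp only [expectedConj, hJop]
  simp only [Fintype.sum_prod_type, mul_smul, ← smul_sum, Jop_eq_selSum]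
  -- After averaging over the forget selection, what remains is again a conjugated selection sum,
  -- now in the retain selection.
  have regroup : ∀ (c : ℝ) (S T : Matrix (Fin d) (Fin d) ℝ), 1 - c • S + T = (1 + T) + (-c) • S :=
    fun _ _ _ => by module
  simp only [sum_selProb_smul_conj_selSum]
  simp only [regroup, smul_add, sum_add_distrib, sum_selProb_smul_conj_selSum, ← sum_smul,
    sum_selProb, one_smul]
  have hB' : (B : ℝ) ≠ 0 := Nat.cast_ne_zero.mpr hB
  have hCr : Crc η α B nr = (-(η * (1 - α) / B)) ^ 2 * (B / nr - (B / nr) ^ 2) := by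
    rw [neg_sq, div_sq_mul_sub_sq hB', Crc, mul_pow]
  have hCf : Cfc η α B nf = (η * α / B) ^ 2 * (B / nf - (B / nf) ^ 2) := by
    rw [div_sq_mul_sub_sq hB', Cfc, mul_pow]
  rw [(isHermitian_iff_isSymm.mp (isSelfAdjoint_Jbar η α hR hF)).eq,
    Jbar_eq_add_smul_sum η α B hB, noiseMap, hCr, hCf]
  abel

end Operators

section Iteration

variable {d nr nf : ℕ} (η α : ℝ) (B : ℕ) (HR : Fin nr → Matrix (Fin d) (Fin d) ℝ)
  (HF : Fin nf → Matrix (Fin d) (Fin d) ℝ)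

lemma Wk_cons {k : ℕ} (x : (Fin nr → Bool) × (Fin nf → Bool))
    (s : Fin k → (Fin nr → Bool) × (Fin nf → Bool)) :
    Wk η α B HR HF (Fin.cons x s) = Wk η α B HR HF s * Jop η α B HR HF x := by
  simp [Wk, List.ofFn_succ]

lemma sum_prod_selProb_smul_Wk_conj (k : ℕ) (M : Matrix (Fin d) (Fin d) ℝ) :
    ∑ s : Fin k → (Fin nr → Bool) × (Fin nf → Bool),
      (∏ i, selProb nr B (s i).1 * selProb nf B (s i).2) •
        (Wk η α B HR HF s * M * (Wk η α B HR HF s)ᵀ)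
      = (expectedConj η α B HR HF)^[k] M := by
  induction k generalizing M with
  | zero => simp [Wk]
  | succ k ih =>
    rw [Function.iterate_succ_apply, ← ih, ← (Fin.consEquiv _).sum_comp, Fintype.sum_prod_type,
      sum_comm]
    refine sum_congr rfl fun s _ => ?_
    simp only [expectedConj, mul_sum, sum_mul, smul_sum]
    refine sum_congr rfl fun x _ => ?_
    simp only [Fin.consEquiv, Equiv.coe_fn_mk]
    rw [Wk_cons, Fin.prod_univ_succ]
    simp only [Fin.cons_zero, Fin.cons_succ, transpose_mul, mul_smul_comm, smul_mul_assoc,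
      smul_smul, mul_assoc, mul_comm]

lemma Ewk2_eq_trace_iterate (k : ℕ) :
    Ewk2 η α B HR HF k = ((expectedConj η α B HR HF)^[k] 1).trace := by
  simp [← sum_prod_selProb_smul_Wk_conj, Ewk2, trace_sum]

end Iteration

section Order

variable {d nr nf : ℕ} (η α : ℝ) {B : ℕ} {HR : Fin nr → Matrix (Fin d) (Fin d) ℝ}
  {HF : Fin nf → Matrix (Fin d) (Fin d) ℝ}

lemma Crc_nonneg (hB : 0 < B) {n : ℕ} (hBn : B ≤ n) : 0 ≤ Crc η α B n :=
  mul_nonneg (by positivity)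
    (sub_nonneg.mpr (inv_anti₀ (by exact_mod_cast hB) (by exact_mod_cast hBn)))

lemma Cfc_nonneg (hB : 0 < B) {n : ℕ} (hBn : B ≤ n) : 0 ≤ Cfc η α B n :=
  mul_nonneg (by positivity)
    (sub_nonneg.mpr (inv_anti₀ (by exact_mod_cast hB) (by exact_mod_cast hBn)))

lemma noiseMap_add (M M' : Matrix (Fin d) (Fin d) ℝ) :
    noiseMap η α B HR HF (M + M') = noiseMap η α B HR HF M + noiseMap η α B HR HF M' := by
  simp only [noiseMap, mul_add, add_mul, sum_add_distrib, smul_add]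
  abel

lemma noiseMap_nonneg (hB : 0 < B) (hBr : B ≤ nr) (hBf : B ≤ nf)
    (hR : ∀ r, IsSelfAdjoint (HR r)) (hF : ∀ f, IsSelfAdjoint (HF f))
    {M : Matrix (Fin d) (Fin d) ℝ} (hM : 0 ≤ M) : 0 ≤ noiseMap η α B HR HF M :=
  add_nonneg
    (smul_nonneg (Cfc_nonneg η α hB hBf) (sum_nonneg fun f _ => (hF f).conjugate_nonneg hM))
    (smul_nonneg (Crc_nonneg η α hB hBr) (sum_nonneg fun r _ => (hR r).conjugate_nonneg hM))

lemma Nmat_nonneg (hB : 0 < B) (hBr : B ≤ nr) (hBf : B ≤ nf)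
    (hR : ∀ r, IsSelfAdjoint (HR r)) (hF : ∀ f, IsSelfAdjoint (HF f)) (k : ℕ) :
    0 ≤ Nmat η α B HR HF k := by
  induction k with
  | zero => exact zero_le_one
  | succ k ih => exact noiseMap_nonneg η α hB hBr hBf hR hF ih

variable (B HR HF) in
lemma expectedConj_mono (hBr : B ≤ nr) (hBf : B ≤ nf) : Monotone (expectedConj η α B HR HF) :=
  fun M M' hMM' => sum_le_sum fun x _ => smul_le_smul_of_nonneg_left
    (by simpa only [transpose_eq_star] using star_right_conjugate_le_conjugate hMM' _)
    (mul_nonneg (selProb_nonneg hBr x.1) (selProb_nonneg hBf x.2))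

lemma le_expectedConj_iterate_one (hB : 0 < B) (hBr : B ≤ nr) (hBf : B ≤ nf)
    (hR : ∀ r, IsSelfAdjoint (HR r)) (hF : ∀ f, IsSelfAdjoint (HF f)) {k : ℕ} (hk : 1 ≤ k) :
    Jbar η α HR HF ^ k * (Jbar η α HR HF ^ k)ᵀ + Nmat η α B HR HF k
      ≤ (expectedConj η α B HR HF)^[k] 1 := by
  have hT := expectedConj_eq η α B hB.ne' hR hF
  set J := Jbar η α HR HF
  induction k, hk using Nat.le_induction with
  | base => rw [Function.iterate_one, hT, pow_one, Nmat_succ, mul_one]; rfl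
  | succ k hk ih =>
    have hpow : J ^ (k + 1) * (J ^ (k + 1))ᵀ = J * (J ^ k * (J ^ k)ᵀ) * Jᵀ := by
      rw [pow_succ', transpose_mul, mul_assoc, mul_assoc, mul_assoc]
    have hJN : 0 ≤ J * Nmat η α B HR HF k * Jᵀ := by
      rw [transpose_eq_star]
      exact star_right_conjugate_nonneg (Nmat_nonneg η α hB hBr hBf hR hF k) J
    have hNJ : 0 ≤ noiseMap η α B HR HF (J ^ k * (J ^ k)ᵀ) := by
      refine noiseMap_nonneg η α hB hBr hBf hR hF ?_
      rw [transpose_eq_star]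
      exact mul_star_self_nonneg _
    calc J ^ (k + 1) * (J ^ (k + 1))ᵀ + Nmat η α B HR HF (k + 1)
        ≤ J ^ (k + 1) * (J ^ (k + 1))ᵀ + Nmat η α B HR HF (k + 1)
          + (J * Nmat η α B HR HF k * Jᵀ + noiseMap η α B HR HF (J ^ k * (J ^ k)ᵀ)) :=
          le_add_of_nonneg_right (add_nonneg hJN hNJ)
      _ = J * (J ^ k * (J ^ k)ᵀ + Nmat η α B HR HF k) * Jᵀ
          + noiseMap η α B HR HF (J ^ k * (J ^ k)ᵀ + Nmat η α B HR HF k) := by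
          rw [noiseMap_add, mul_add, add_mul, ← hpow, Nmat_succ]
          abel
      _ = expectedConj η α B HR HF (J ^ k * (J ^ k)ᵀ + Nmat η α B HR HF k) := (hT _).symm
      _ ≤ expectedConj η α B HR HF ((expectedConj η α B HR HF)^[k] 1) :=
          expectedConj_mono η α B HR HF hBr hBf ih
      _ = (expectedConj η α B HR HF)^[k + 1] 1 := (Function.iterate_succ_apply' _ _ _).symm

end Order

end Unlearning

open Unlearning in
theorem stmt0_general (d nr nf B : ℕ)
    (hB : 0 < B) (hBr : B ≤ nr) (hBf : B ≤ nf)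
    (η α : ℝ)
    (HR : Fin nr → Matrix (Fin d) (Fin d) ℝ) (HF : Fin nf → Matrix (Fin d) (Fin d) ℝ)
    (hHR : ∀ r, (HR r).PosSemidef) (hHF : ∀ f, (HF f).PosSemidef) :
    (∀ k, 1 ≤ k →
        ((Jbar η α HR HF ^ (2 * k)).trace + (Nmat η α B HR HF k).trace
          ≤ Ewk2 η α B HR HF k)) ∧
      (Tendsto (fun k => (Nmat η α B HR HF k).trace) atTop atTop →
        Tendsto (fun k => Ewk2 η α B HR HF k) atTop atTop) := by
  have hR : ∀ r, IsSelfAdjoint (HR r) := fun r => (hHR r).isHermitian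
  have hF : ∀ f, IsSelfAdjoint (HF f) := fun f => (hHF f).isHermitian
  set J := Jbar η α HR HF
  have hJ : ∀ k, J ^ (2 * k) = J ^ k * (J ^ k)ᵀ := fun k => by
    rw [transpose_pow, (isHermitian_iff_isSymm.mp (isSelfAdjoint_Jbar η α hR hF)).eq, two_mul,
      pow_add]
  have lower : ∀ k, 1 ≤ k → (J ^ (2 * k)).trace + (Nmat η α B HR HF k).trace ≤ Ewk2 η α B HR HF k :=
    fun k hk => by
      rw [Ewk2_eq_trace_iterate, hJ, ← trace_add]
      exact (tracePositiveLinearMap (Fin d) ℝ ℝ).mono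
        (le_expectedConj_iterate_one η α hB hBr hBf hR hF hk)
  refine ⟨lower, fun hN => tendsto_atTop_mono' atTop ?_ hN⟩
  filter_upwards [eventually_ge_atTop 1] with k hk
  have hJk : 0 ≤ (J ^ (2 * k)).trace := by
    rw [hJ, transpose_eq_star]
    exact (posSemidef_self_mul_conjTranspose _).trace_nonneg
  linarith [lower k hk]

/-- stability recurrence, lower bound.  In the unlearning setup, for
every `k ≥ 1`, `E Tr(J_0ᵀ ⋯ J_{k−1}ᵀ J_{k−1} ⋯ J_0) ≥ Tr(M_k) = Tr(J^{2k}) + Tr(N_k)`;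
consequently if `Tr(N_k) → ∞` then `E‖w_k‖² → ∞`. -/
theorem stmt0 (d nr nf B : ℕ) (hd : 1 ≤ d) (hnr : 1 ≤ nr) (hnf : 1 ≤ nf)
    (hB : 0 < B) (hBr : B ≤ nr) (hBf : B ≤ nf)
    (η α : ℝ) (hη : 0 < η) (hα : α ∈ Set.Icc (0 : ℝ) 1)
    (HR : Fin nr → Matrix (Fin d) (Fin d) ℝ) (HF : Fin nf → Matrix (Fin d) (Fin d) ℝ)
    (hHR : ∀ r, (HR r).PosSemidef) (hHF : ∀ f, (HF f).PosSemidef) :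
    (∀ k, 1 ≤ k →
        ((Jbar η α HR HF ^ (2 * k)).trace + (Nmat η α B HR HF k).trace
          ≤ Ewk2 η α B HR HF k)) ∧
      (Tendsto (fun k => (Nmat η α B HR HF k).trace) atTop atTop →
        Tendsto (fun k => Ewk2 η α B HR HF k) atTop atTop) :=
  stmt0_general d nr nf B hB hBr hBf η α HR HF hHR hHF
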